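/- Let R be a Gorenstein local ring, r ∈ R, and let ⋯ → R^n →^ψ R^n →^φ R^n →^ψ ⋯ be an exact sequence of free R-modules with M = coker φ. If there exist R-homomorphisms α, β : R^n → R^n with φ∘α + β∘ψ = r·I_n, then r annihilates stableHom_R(M,M). -/

import Mathlib

/-!
For `f : M → M` we have `r • f = f ∘ (r • id_M)`, so it suffices that `r • id_M` factors
through a projective module. Writing `M = Rⁿ / im φ`, the map `ψ` descends to `ψ̄ : M → Rⁿ`
because `ψ ∘ φ = 0`, and modulo `im φ` the identity `φ ∘ α + β ∘ ψ = r • id` says that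
`r • id_M = π ∘ β ∘ ψ̄`, which factors through the free module `Rⁿ`.
-/

open CategoryTheory IsLocalRing

universe u

variable (R : Type u) [CommRing R]

/-- The submodule of `Hom_R(M,N)` consisting of maps factoring through a projective module. -/
def projStable (M N : Type u) [AddCommGroup M] [Module R M] [AddCommGroup N] [Module R N] :
    Submodule R (M →ₗ[R] N) where
  carrier := {f | ∃ (P : Type u) (_ : AddCommGroup P) (_ : Module R P)
    (_ : Module.Projective R P) (g : M →ₗ[R] P) (h : P →ₗ[R] N), f = h.comp g}
  zero_mem' := ⟨PUnit, inferInstance, inferInstance, inferInstance, 0, 0, by ext x; simp⟩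
  add_mem' := by
    rintro f f' ⟨P, _, _, _, g, h, rfl⟩ ⟨P', _, _, _, g', h', rfl⟩
    exact ⟨P × P', inferInstance, inferInstance, inferInstance, g.prod g',
      h.comp (LinearMap.fst R P P') + h'.comp (LinearMap.snd R P P'), by ext x; simp⟩
  smul_mem' := by
    rintro r f ⟨P, _, _, _, g, h, rfl⟩
    exact ⟨P, inferInstance, inferInstance, inferInstance, g, r • h, by ext x; simp⟩

/-- The stable hom module `Hom_R(M,N)/P_R(M,N)`. -/
def stableHom (M N : Type u) [AddCommGroup M] [Module R M] [AddCommGroup N] [Module R N] :=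
  (M →ₗ[R] N) ⧸ projStable R M N

noncomputable instance (M N : Type u) [AddCommGroup M] [Module R M] [AddCommGroup N]
    [Module R N] : AddCommGroup (stableHom R M N) :=
  inferInstanceAs (AddCommGroup ((M →ₗ[R] N) ⧸ projStable R M N))

noncomputable instance (M N : Type u) [AddCommGroup M] [Module R M] [AddCommGroup N]
    [Module R N] : Module R (stableHom R M N) :=
  inferInstanceAs (Module R ((M →ₗ[R] N) ⧸ projStable R M N))

/-- `Ann(M)`: the annihilator of the stable endomorphism module of `M`. -/
noncomputable def stAnn (M : Type u) [AddCommGroup M] [Module R M] : Ideal R :=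
  Module.annihilator R (stableHom R M M)

/-- `Ext_R^n(M,N)` as an `R`-module. -/
noncomputable abbrev ExtM (n : ℕ) (M : ModuleCat.{u} R) (N : ModuleCat.{u} R) :
    ModuleCat.{u} R :=
  ((Ext R (ModuleCat.{u} R) n).obj (Opposite.op M)).obj N

/-- `ca^n(R)`, the `n`-th cohomology annihilator ideal. -/
noncomputable def ca (n : ℕ) : Ideal R :=
  ⨅ (m : ℕ) (_ : n ≤ m) (M : ModuleCat.{u} R) (N : ModuleCat.{u} R)
    (_ : Module.Finite R M) (_ : Module.Finite R N),
    Module.annihilator R (ExtM R m M N)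


/-- A Gorenstein local ring: a noetherian local ring which has finite injective dimension
over itself, expressed by eventual vanishing of `Ext^i(R/m, R)`. -/
def IsGorensteinLocalRing : Prop :=
  IsNoetherianRing R ∧ IsLocalRing R ∧ ∃ n : ℕ, ∀ (I : Ideal R), I.IsMaximal →
    ∀ i : ℕ, n < i →
      Subsingleton (ExtM R i (ModuleCat.of R (R ⧸ I)) (ModuleCat.of R R))

section

variable {R}

theorem projStable.comp_mem {M N P : Type u} [AddCommGroup M] [Module R M] [AddCommGroup N]
    [Module R N] [AddCommGroup P] [Module R P] [Module.Projective R P]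
    (g : M →ₗ[R] P) (h : P →ₗ[R] N) : h ∘ₗ g ∈ projStable R M N :=
  ⟨P, inferInstance, inferInstance, inferInstance, g, h, rfl⟩

theorem projStable.comp_mem_of_mem {M N K : Type u} [AddCommGroup M] [Module R M]
    [AddCommGroup N] [Module R N] [AddCommGroup K] [Module R K]
    (f : N →ₗ[R] K) {g : M →ₗ[R] N} (hg : g ∈ projStable R M N) :
    f ∘ₗ g ∈ projStable R M K := by
  obtain ⟨P, _, _, _, g', h, rfl⟩ := hg
  exact ⟨P, inferInstance, inferInstance, inferInstance, g', f ∘ₗ h, rfl⟩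

theorem mem_stAnn_of_smul_id_mem {M : Type u} [AddCommGroup M] [Module R M] {r : R}
    (hr : r • LinearMap.id ∈ projStable R M M) : r ∈ stAnn R M := by
  rw [stAnn, Module.mem_annihilator]
  rintro ⟨f⟩
  change Submodule.Quotient.mk (r • f) = (0 : (M →ₗ[R] M) ⧸ projStable R M M)
  rw [Submodule.Quotient.mk_eq_zero, ← LinearMap.comp_id f, ← LinearMap.comp_smul]
  exact projStable.comp_mem_of_mem f hr

theorem Submodule.mkQ_comp_liftQ_range_eq_smul_id {S F G H : Type*} [CommRing S]
    [AddCommGroup F] [Module S F] [AddCommGroup G] [Module S G] [AddCommGroup H] [Module S H]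
    {φ : G →ₗ[S] F} {ψ : F →ₗ[S] H} (hψφ : ψ ∘ₗ φ = 0) {r : S} (α : F →ₗ[S] G)
    (β : H →ₗ[S] F) (hfac : φ ∘ₗ α + β ∘ₗ ψ = r • LinearMap.id) :
    (LinearMap.range φ).mkQ ∘ₗ β ∘ₗ (LinearMap.range φ).liftQ ψ
      (LinearMap.range_le_ker_iff.mpr hψφ) = r • LinearMap.id := by
  ext y
  have hy := LinearMap.congr_fun hfac y
  simp only [LinearMap.add_apply, LinearMap.comp_apply, LinearMap.smul_apply,
    LinearMap.id_apply] at hy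
  simp only [LinearMap.coe_comp, Function.comp_apply, Submodule.mkQ_apply,
    Submodule.liftQ_apply, LinearMap.smul_apply, LinearMap.id_apply,
    ← Submodule.Quotient.mk_smul, Submodule.Quotient.eq]
  exact ⟨-α y, by rw [map_neg, ← hy]; abel⟩

end

theorem stmt4 (r : R) (n : ℕ)
    (φ ψ : (Fin n → R) →ₗ[R] (Fin n → R))
    (hex2 : Function.Exact φ ψ)
    (α β : (Fin n → R) →ₗ[R] (Fin n → R))
    (hfac : φ ∘ₗ α + β ∘ₗ ψ = r • LinearMap.id) :
    r ∈ stAnn R ((Fin n → R) ⧸ LinearMap.range φ) := by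
  apply mem_stAnn_of_smul_id_mem
  rw [← Submodule.mkQ_comp_liftQ_range_eq_smul_id hex2.linearMap_comp_eq_zero α β hfac,
    ← LinearMap.comp_assoc]
  exact projStable.comp_mem _ _
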